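/- For a weighted graph G and a vertex (u,i) of its k-spinning S_k(G) with k ≥ max w, and for any θ ∈ R^{|VG|} with lift θ^σ_{(v,j)} = θ_v, one has ∑_{(v,j) adjacent to (u,i) in S_k(G)} sin(θ^σ_{(v,j)} − θ^σ_{(u,i)}) = ∑_{v ~ u in G} w_{uv} sin(θ_v − θ_u); in particular the terms from vertices (u,j) with j ≠ i contribute zero. -/

import Mathlib

open Real Finset

/-- Adjacency of the `k`-spinning of a weighted graph with oriented weight
function `w` (each edge carries its weight in exactly one direction). -/
def spinAdj {V : Type*} (k : ℕ) (w : V → V → ℕ) (x y : V × ZMod k) : Prop :=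
  (y.2 - x.2).val < w x.1 y.1 ∨ (x.2 - y.2).val < w y.1 x.1 ∨ (x.1 = y.1 ∧ x.2 ≠ y.2)

instance {V : Type*} [DecidableEq V] (k : ℕ) (w : V → V → ℕ) (x y : V × ZMod k) :
    Decidable (spinAdj k w x y) := by unfold spinAdj; infer_instance

/-!
Sum over `S_k(G)` fiber by fiber. The lift is constant on fibers, so the own fiber of `u`
contributes multiples of `sin 0 = 0`, and the fiber of `v ≠ u` contributes `sin (θ v - θ u)`
times the number of neighbours of `(u, i)` in it. These neighbours form an arc of `w u v`
residues after `i` or of `w v u` residues before `i`; since every edge is oriented only one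
of the arcs is nonempty, so there are exactly `w u v + w v u` of them.
-/

namespace ZMod

variable {k m : ℕ} [NeZero k]

theorem card_filter_val_lt (hm : m ≤ k) : #{d : ZMod k | d.val < m} = m := by
  refine (card_nbij' val (Nat.cast : ℕ → ZMod k) ?_ ?_ ?_ ?_).trans (card_range m)
  · intro d hd
    simpa using hd
  · intro a ha
    simpa [val_cast_of_lt ((mem_range.1 ha).trans_le hm)] using ha
  · intro d _
    exact natCast_zmod_val d
  · intro a ha
    exact val_cast_of_lt ((mem_range.1 ha).trans_le hm)

theorem card_filter_val_sub_right_lt (hm : m ≤ k) (i : ZMod k) :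
    #{j : ZMod k | (j - i).val < m} = m :=
  (card_nbij' (· - i) (· + i) (by simp [Set.MapsTo]) (by simp [Set.MapsTo])
    (by simp [Set.LeftInvOn]) (by simp [Set.RightInvOn, Set.LeftInvOn])).trans
      (card_filter_val_lt hm)

theorem card_filter_val_sub_left_lt (hm : m ≤ k) (i : ZMod k) :
    #{j : ZMod k | (i - j).val < m} = m :=
  (card_nbij' (i - ·) (i - ·) (by simp [Set.MapsTo]) (by simp [Set.MapsTo])
    (by simp [Set.LeftInvOn]) (by simp [Set.RightInvOn, Set.LeftInvOn])).trans
      (card_filter_val_lt hm)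

end ZMod

theorem card_spinAdj_fiber {V : Type*} [DecidableEq V] {k : ℕ} [NeZero k] {w : V → V → ℕ}
    {u v : V} (hvu : v ≠ u) (horient : w u v = 0 ∨ w v u = 0)
    (huv_le : w u v ≤ k) (hvu_le : w v u ≤ k)
    (i : ZMod k) : #{j : ZMod k | spinAdj k w (u, i) (v, j)} = w u v + w v u := by
  have hadj : ∀ j : ZMod k,
      spinAdj k w (u, i) (v, j) ↔ (j - i).val < w u v ∨ (i - j).val < w v u :=
    fun j => by simp [spinAdj, hvu.symm]
  simp only [hadj]
  rcases horient with h | h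
  · simpa [h] using ZMod.card_filter_val_sub_left_lt hvu_le i
  · simpa [h] using ZMod.card_filter_val_sub_right_lt huv_le i

theorem spinning_neighbor_sum_general {V : Type*} [Fintype V] [DecidableEq V]
    (w : V → V → ℕ)
    (horient : ∀ u v, w u v = 0 ∨ w v u = 0)
    (k : ℕ) [NeZero k] (hmax : ∀ u v, w u v ≤ k)
    (θ : V → ℝ) (u : V) (i : ZMod k) :
    (∑ y : V × ZMod k,
        (if spinAdj k w (u, i) y then Real.sin (θ y.1 - θ u) else 0)) =
      (∑ v, ((w v u + w u v : ℕ) : ℝ) * Real.sin (θ v - θ u)) ∧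
    (∑ j ∈ Finset.univ.filter (fun j : ZMod k => j ≠ i),
        Real.sin (θ u - θ u)) = 0 := by
  refine ⟨?_, by simp⟩
  rw [Fintype.sum_prod_type]
  refine sum_congr rfl fun v _ => ?_
  rcases eq_or_ne v u with rfl | hvu
  · simp
  · rw [← sum_filter]
    dsimp only
    rw [sum_const, card_spinAdj_fiber hvu (horient u v) (hmax u v) (hmax v u),
      nsmul_eq_mul, add_comm]

/-- For any vertex `(u,i)` of the `k`-spinning, the unweighted Kuramoto sum over its
neighbours at the lifted point `θ^σ` equals the weighted Kuramoto sum over the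
neighbours of `u` in `G` at `θ`; in particular the fiber terms contribute zero. -/
theorem spinning_neighbor_sum {V : Type*} [Fintype V] [DecidableEq V]
    (w : V → V → ℕ) (hdiag : ∀ v, w v v = 0)
    (horient : ∀ u v, w u v = 0 ∨ w v u = 0)
    (k : ℕ) [NeZero k] (hmax : ∀ u v, w u v ≤ k)
    (θ : V → ℝ) (u : V) (i : ZMod k) :
    (∑ y : V × ZMod k,
        (if spinAdj k w (u, i) y then Real.sin (θ y.1 - θ u) else 0)) =
      (∑ v, ((w v u + w u v : ℕ) : ℝ) * Real.sin (θ v - θ u)) ∧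
    (∑ j ∈ Finset.univ.filter (fun j : ZMod k => j ≠ i),
        Real.sin (θ u - θ u)) = 0 :=
  spinning_neighbor_sum_general w horient k hmax θ u i
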